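/- Let f : ℝ^m → ℝ be differentiable with β-Lipschitz continuous gradient (β > 0), attaining its infimum f⋆, and satisfying the Polyak–Łojasiewicz condition with parameter α > 0, i.e. 2α(f(x) − f⋆) ≤ ‖∇f(x)‖₂² for all x. Let η ∈ (0, 1/(2β)) and σ = 1 − αη(1 − 2ηβ), and assume σ ≥ 0. Then the gradient descent iterates x(k+1) = x(k) − η∇f(x(k)) satisfy f(x(k)) − f⋆ ≤ σ^k (f(x(0)) − f⋆) for all k ∈ ℕ; in particular f(x(k)) − f⋆ converges to 0 at a linear (geometric) rate. -/

import Mathlib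

open InnerProductSpace

lemma descent_lemma {m : ℕ} (f : EuclideanSpace ℝ (Fin m) → ℝ) (β : ℝ) (hβ : 0 < β)
    (hdiff : Differentiable ℝ f)
    (hlip : ∀ x y : EuclideanSpace ℝ (Fin m),
      ‖gradient f x - gradient f y‖ ≤ β * ‖x - y‖)
    (x v : EuclideanSpace ℝ (Fin m)) :
    f (x + v) ≤ f x + ⟪gradient f x, v⟫_ℝ + β / 2 * ‖v‖ ^ 2 := by
  set c : ℝ := ⟪gradient f x, v⟫_ℝ with hc
  set g : ℝ → ℝ := fun t => f (x + t • v) - t * c - β * t ^ 2 / 2 * ‖v‖ ^ 2 with hg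
  have hderiv : ∀ t : ℝ, HasDerivAt g
      (⟪gradient f (x + t • v), v⟫_ℝ - c - β * t * ‖v‖ ^ 2) t := by
    intro t
    have hcurve : HasDerivAt (fun t : ℝ => x + t • v) v t := by
      simpa using ((hasDerivAt_id t).smul_const v).const_add x
    have hf : HasDerivAt (fun t : ℝ => f (x + t • v)) (⟪gradient f (x + t • v), v⟫_ℝ) t := by
      have := ((hdiff (x + t • v)).hasGradientAt.hasFDerivAt).comp_hasDerivAt t hcurve
      rw [InnerProductSpace.toDual_apply_apply] at this
      exact this
    have h2 : HasDerivAt (fun t : ℝ => t * c) c t := by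
      simpa using (hasDerivAt_id t).mul_const c
    have h3 : HasDerivAt (fun t : ℝ => β * t ^ 2 / 2 * ‖v‖ ^ 2) (β * t * ‖v‖ ^ 2) t := by
      have : HasDerivAt (fun t : ℝ => t ^ 2) (2 * t) t := by
        simpa using hasDerivAt_pow 2 t
      have := ((this.const_mul β).div_const 2).mul_const (‖v‖ ^ 2)
      exact this.congr_deriv (by ring)
    exact (hf.sub h2).sub h3
  have hanti : AntitoneOn g (Set.Icc 0 1) := by
    apply antitoneOn_of_deriv_nonpos (convex_Icc 0 1)
    · exact (Continuous.sub (Continuous.sub (hdiff.continuous.comp (by continuity))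
        (by continuity)) (by continuity)).continuousOn
    · intro t ht
      exact (hderiv t).differentiableAt.differentiableWithinAt
    · intro t ht
      rw [interior_Icc] at ht
      rw [(hderiv t).deriv]
      have hineq : ⟪gradient f (x + t • v), v⟫_ℝ - c ≤ β * t * ‖v‖ ^ 2 := by
        have : ⟪gradient f (x + t • v) - gradient f x, v⟫_ℝ
            ≤ ‖gradient f (x + t • v) - gradient f x‖ * ‖v‖ :=
          real_inner_le_norm _ _
        have h2 : ‖gradient f (x + t • v) - gradient f x‖ ≤ β * (t * ‖v‖) := by
          have := hlip (x + t • v) x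
          simpa [norm_smul, abs_of_pos ht.1] using this
        calc ⟪gradient f (x + t • v), v⟫_ℝ - c
            = ⟪gradient f (x + t • v) - gradient f x, v⟫_ℝ := by
              rw [inner_sub_left]
          _ ≤ ‖gradient f (x + t • v) - gradient f x‖ * ‖v‖ := this
          _ ≤ β * (t * ‖v‖) * ‖v‖ := by
              apply mul_le_mul_of_nonneg_right h2 (norm_nonneg v)
          _ = β * t * ‖v‖ ^ 2 := by ring
      linarith
  have := hanti (Set.left_mem_Icc.2 zero_le_one) (Set.right_mem_Icc.2 zero_le_one) zero_le_one
  simp only [hg, one_smul, zero_smul, add_zero, one_pow] at this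
  norm_num at this
  linarith

/-- **Linear convergence of gradient descent under the PL condition.**
If `f` is differentiable with `β`-Lipschitz gradient, attains its infimum `fstar`,
and satisfies the Polyak–Łojasiewicz condition with parameter `α > 0`, then for any
stepsize `η ∈ (0, 1/(2β))` with `σ = 1 − αη(1 − 2ηβ) ≥ 0`, the gradient descent
iterates `x(k+1) = x(k) − η∇f(x(k))` satisfy
`f(x(k)) − fstar ≤ σ^k (f(x(0)) − fstar)` for all `k`. -/
theorem gradient_descent_linear_convergence_PL {m : ℕ} (f : EuclideanSpace ℝ (Fin m) → ℝ)
    (β α fstar : ℝ) (hβ : 0 < β) (hα : 0 < α)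
    (hdiff : Differentiable ℝ f)
    (hlip : ∀ x y : EuclideanSpace ℝ (Fin m),
      ‖gradient f x - gradient f y‖ ≤ β * ‖x - y‖)
    (hmin : ∃ z : EuclideanSpace ℝ (Fin m), f z = fstar ∧ ∀ x, fstar ≤ f x)
    (hPL : ∀ x : EuclideanSpace ℝ (Fin m), 2 * α * (f x - fstar) ≤ ‖gradient f x‖ ^ 2)
    (η : ℝ) (hη0 : 0 < η) (hη1 : η < 1 / (2 * β))
    (σ : ℝ) (hσ : σ = 1 - α * η * (1 - 2 * η * β)) (hσ0 : 0 ≤ σ)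
    (x : ℕ → EuclideanSpace ℝ (Fin m))
    (hiter : ∀ k, x (k + 1) = x k - η • gradient f (x k)) :
    ∀ k, f (x k) - fstar ≤ σ ^ k * (f (x 0) - fstar) := by
  obtain ⟨z, hz, hlb⟩ := hmin
  have hβη : β * η < 1 / 2 := by
    rw [lt_div_iff₀ (by positivity : (0:ℝ) < 2 * β)] at hη1
    nlinarith
  have hstep : ∀ k, f (x (k + 1)) - fstar ≤ σ * (f (x k) - fstar) := by
    intro k
    set g := gradient f (x k) with hgdef
    have hd := descent_lemma f β hβ hdiff hlip (x k) (-(η • g))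
    have hx1 : x (k + 1) = x k + -(η • g) := by rw [hiter k]; abel
    rw [← hx1] at hd
    have hin : ⟪g, -(η • g)⟫_ℝ = -(η * ‖g‖ ^ 2) := by
      rw [inner_neg_right, real_inner_smul_right, real_inner_self_eq_norm_sq]
    have hnn : ‖-(η • g)‖ ^ 2 = η ^ 2 * ‖g‖ ^ 2 := by
      rw [norm_neg, norm_smul, Real.norm_eq_abs, abs_of_pos hη0]; ring
    rw [hin, hnn] at hd
    -- f(x(k+1)) ≤ f(x k) - η‖g‖² + β/2 η²‖g‖²
    have hPLk := hPL (x k)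
    have hΔ : 0 ≤ f (x k) - fstar := by linarith [hlb (x k)]
    have hcoef : 0 ≤ η * (1 - β * η / 2) := by nlinarith
    -- f(x(k+1)) - fstar ≤ (1 - 2αη(1 - βη/2)) Δ ≤ σ Δ
    have key : f (x (k+1)) - fstar ≤ (1 - 2 * α * η * (1 - β * η / 2)) * (f (x k) - fstar) := by
      have h1 : η * (1 - β * η / 2) * (2 * α * (f (x k) - fstar))
          ≤ η * (1 - β * η / 2) * ‖g‖ ^ 2 :=
        mul_le_mul_of_nonneg_left hPLk hcoef
      nlinarith
    have hσle : 1 - 2 * α * η * (1 - β * η / 2) ≤ σ := by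
      rw [hσ]
      nlinarith [mul_pos hα hη0, mul_pos (mul_pos hα hη0) (mul_pos hβ hη0)]
    calc f (x (k+1)) - fstar ≤ (1 - 2 * α * η * (1 - β * η / 2)) * (f (x k) - fstar) := key
      _ ≤ σ * (f (x k) - fstar) := mul_le_mul_of_nonneg_right hσle hΔ
  intro k
  induction k with
  | zero => simp
  | succ n ih =>
    calc f (x (n + 1)) - fstar ≤ σ * (f (x n) - fstar) := hstep n
      _ ≤ σ * (σ ^ n * (f (x 0) - fstar)) := mul_le_mul_of_nonneg_left ih hσ0
      _ = σ ^ (n + 1) * (f (x 0) - fstar) := by ring
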